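/- For all n ≥ 3, ∑_{k=0}^{⌊n/2⌋} (binom(k+1, n−2k) + binom(k, n−2k−1)) equals the (1,3,3)-Padovan number p(n−2), where p(0)=1, p(1)=3, p(2)=3, and p(n)=p(n−2)+p(n−3). -/

import Mathlib

open Finset

/-!
`diagSum m = ∑ₖ binom(k, m - 2k)` counts compositions of `m` into parts `2` and `3` (`k` parts,
`m - 2k` of them equal to `3`), so Pascal's rule gives `diagSum (m + 3) = diagSum (m + 1) + diagSum m`.
Reindexing `k + 1 ↦ k` turns the first half of the sum into `diagSum (n + 2)`; the second half is
`diagSum (n - 1)`. Their sum obeys the Padovan recurrence too, and starts with `1, 3, 3`.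
-/

def binom (a b : ℤ) : ℤ := if 0 ≤ b ∧ b ≤ a then Nat.choose a.toNat b.toNat else 0

def p : ℕ → ℤ
  | 0 => 1
  | 1 => 3
  | 2 => 3
  | (n + 3) => p (n + 1) + p n

lemma binom_of_neg {a b : ℤ} (hb : b < 0) : binom a b = 0 := by
  rw [binom, if_neg (by omega)]

lemma binom_of_lt {a b : ℤ} (hab : a < b) : binom a b = 0 := by
  rw [binom, if_neg (by omega)]

lemma binom_succ_left {a : ℤ} (ha : 0 ≤ a) (b : ℤ) :
    binom (a + 1) b = binom a b + binom a (b - 1) := by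
  unfold binom
  split_ifs
  · rw [show (a + 1).toNat = a.toNat + 1 by omega, show b.toNat = (b - 1).toNat + 1 by omega,
      Nat.choose_succ_succ]
    push_cast
    ring
  · simp [show b.toNat = 0 by omega]
  · rw [show b.toNat = (a + 1).toNat by omega, show (b - 1).toNat = a.toNat by omega,
      show (a + 1).toNat = a.toNat + 1 by omega, Nat.choose_self, Nat.choose_self]
    simp
  all_goals omega

lemma eq_p_of_recurrence (f : ℕ → ℤ) (h0 : f 0 = 1) (h1 : f 1 = 3) (h2 : f 2 = 3)
    (hrec : ∀ n, f (n + 3) = f (n + 1) + f n) (n : ℕ) : f n = p n := by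
  induction n using p.induct with
  | case1 => exact h0
  | case2 => exact h1
  | case3 => exact h2
  | case4 n ih₁ ih₀ => rw [hrec, p, ih₁, ih₀]

def diagSum (m : ℕ) : ℤ := ∑ k ∈ range (m + 1), binom k ((m : ℤ) - 2 * k)

lemma sum_range_eq_diagSum (m : ℕ) {B : ℕ} (hB : (m : ℤ) < 2 * B) :
    ∑ k ∈ range B, binom k ((m : ℤ) - 2 * k) = diagSum m := by
  have vanish (A : ℕ) (hA : (m : ℤ) < 2 * A) : ∀ k ∈ range (max B (m + 1)), k ∉ range A →
      binom k ((m : ℤ) - 2 * k) = 0 := by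
    intro k _ hk
    rw [mem_range] at hk
    exact binom_of_neg (by omega)
  rw [diagSum, sum_subset (range_mono (le_max_left B (m + 1))) (vanish B hB),
    sum_subset (range_mono (le_max_right B (m + 1))) (vanish (m + 1) (by omega))]

lemma diagSum_add_three (m : ℕ) : diagSum (m + 3) = diagSum (m + 1) + diagSum m := by
  have pascal (k : ℕ) : binom (k + 1 : ℕ) ((m + 3 : ℕ) - 2 * (k + 1 : ℕ)) =
      binom k ((m + 1 : ℕ) - 2 * k) + binom k ((m : ℤ) - 2 * k) := by
    push_cast
    rw [binom_succ_left (by positivity)]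
    ring_nf
  rw [diagSum, sum_range_succ', Nat.cast_zero, binom_of_lt (by omega), add_zero]
  simp only [pascal, sum_add_distrib]
  rw [sum_range_eq_diagSum (m + 1) (by omega), sum_range_eq_diagSum m (by omega)]

lemma sum_range_binom_succ_eq_diagSum (m : ℕ) {B : ℕ} (hB : (m : ℤ) < 2 * B) :
    ∑ k ∈ range B, binom ((k : ℤ) + 1) ((m : ℤ) - 2 * k) = diagSum (m + 2) := by
  rw [← sum_range_eq_diagSum (m + 2) (B := B + 1) (by omega), sum_range_succ',
    Nat.cast_zero, binom_of_lt (by omega), add_zero]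
  refine sum_congr rfl fun k _ => ?_
  push_cast
  ring_nf

lemma diagSum_add_four_add_diagSum_add_one (n : ℕ) : diagSum (n + 4) + diagSum (n + 1) = p n :=
  eq_p_of_recurrence (fun n => diagSum (n + 4) + diagSum (n + 1)) (by decide) (by decide)
    (by decide) (fun n => by simp only [diagSum_add_three (n + 4), diagSum_add_three (n + 1)]; ring) n

theorem sum_binom_eq_padovan (n : ℕ) (hn : 3 ≤ n) :
    ∑ k ∈ range (n / 2 + 1),
      (binom ((k : ℤ) + 1) ((n : ℤ) - 2 * k) + binom (k : ℤ) ((n : ℤ) - 2 * k - 1)) = p (n - 2) := by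
  obtain ⟨m, rfl⟩ : ∃ m, n = m + 3 := ⟨n - 3, by omega⟩
  have shift : ∀ k : ℕ, ((m + 3 : ℕ) : ℤ) - 2 * k - 1 = ((m + 2 : ℕ) : ℤ) - 2 * k := fun k => by
    push_cast
    ring
  rw [sum_add_distrib, sum_range_binom_succ_eq_diagSum (m + 3) (by omega)]
  simp only [shift]
  rw [sum_range_eq_diagSum (m + 2) (by omega), show m + 3 - 2 = m + 1 by omega]
  exact diagSum_add_four_add_diagSum_add_one (m + 1)
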